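/- For all integers N ≥ 0, ℓ ≥ 0, and k ≥ 0, the polynomial identity P_k^{(N+ℓ, −ℓ/2)}(x,y) / (k!·(k+1)!) = Σ_{i=0}^k binom(ℓ, k−i) · P_i^{(N, ℓ/2)}(x,y) / (i!·(i+1)!) holds in ℝ[x,y], where binom(ℓ, j) denotes the binomial coefficient (equal to 0 for j > ℓ). -/
import Mathlib


open MvPolynomial

/-- The constraint polynomials `P_k^{(N,ε)}(x,y)` as elements of `ℝ[x,y]`
(`X 0` is the variable `x`, `X 1` is the variable `y`). -/
noncomputable def constraintPoly (N : ℕ) (ε : ℝ) : ℕ → MvPolynomial (Fin 2) ℝ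
  | 0 => 1
  | 1 => X 0 + X 1 - C (1 + 2 * ε)
  | k + 2 =>
      (C ((k : ℝ) + 2) * X 0 + X 1 - C (((k : ℝ) + 2) * (((k : ℝ) + 2) + 2 * ε))) *
          constraintPoly N ε (k + 1) -
        C (((k : ℝ) + 2) * ((k : ℝ) + 1) * ((N : ℝ) - ((k : ℝ) + 1))) * X 0 *
          constraintPoly N ε k

noncomputable def cpQ (N ℓ : ℕ) (i : ℕ) : MvPolynomial (Fin 2) ℝ :=
  C (1 / ((i.factorial : ℝ) * ((i + 1).factorial : ℝ))) * constraintPoly N ((ℓ : ℝ) / 2) i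

noncomputable def cpQ' (N ℓ : ℕ) : ℕ → MvPolynomial (Fin 2) ℝ
  | 0 => 0
  | i + 1 => cpQ N ℓ i

noncomputable def cpS (N ℓ : ℕ) (m : ℕ) : MvPolynomial (Fin 2) ℝ :=
  ∑ i ∈ Finset.range (m + 1), C ((ℓ.choose (m - i) : ℝ)) * cpQ N ℓ i

lemma fact_succ_cast (n : ℕ) : (((n+1).factorial : ℕ) : ℝ) = ((n:ℝ)+1) * (n.factorial : ℝ) := by
  rw [Nat.factorial_succ]; push_cast; ring

lemma cp_norm_rec (N : ℕ) (ε : ℝ) (k : ℕ) :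
    C (((k:ℝ)+2)*((k:ℝ)+3)) *
      (C (1 / (((k+2).factorial : ℝ) * ((k+3).factorial : ℝ))) * constraintPoly N ε (k+2))
    = (C ((k : ℝ) + 2) * X 0 + X 1 - C (((k : ℝ) + 2) * (((k : ℝ) + 2) + 2 * ε))) *
        (C (1 / (((k+1).factorial : ℝ) * ((k+2).factorial : ℝ))) * constraintPoly N ε (k+1))
      - C ((N:ℝ) - (k:ℝ) - 1) * X 0 *
        (C (1 / ((k.factorial : ℝ) * ((k+1).factorial : ℝ))) * constraintPoly N ε k) := by
  have hf0 : (k.factorial : ℝ) ≠ 0 := Nat.cast_ne_zero.2 k.factorial_ne_zero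
  have hf1 : ((k+1).factorial : ℝ) ≠ 0 := Nat.cast_ne_zero.2 (k+1).factorial_ne_zero
  have hf2 : ((k+2).factorial : ℝ) ≠ 0 := Nat.cast_ne_zero.2 (k+2).factorial_ne_zero
  have hf3 : ((k+3).factorial : ℝ) ≠ 0 := Nat.cast_ne_zero.2 (k+3).factorial_ne_zero
  have e3 := fact_succ_cast (k+2)
  have e2 := fact_succ_cast (k+1)
  have e1 := fact_succ_cast k
  push_cast at e3 e2 e1
  have h1 : (((k:ℝ)+2)*((k:ℝ)+3)) * (1 / (((k+2).factorial : ℝ) * ((k+3).factorial : ℝ)))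
      = 1 / (((k+1).factorial : ℝ) * ((k+2).factorial : ℝ)) := by
    rw [e3]; field_simp; rw [e2]; ring
  have h2 : (((k:ℝ)+2)*((k:ℝ)+3)) * (1 / (((k+2).factorial : ℝ) * ((k+3).factorial : ℝ)))
        * (((k : ℝ) + 2) * ((k : ℝ) + 1) * ((N : ℝ) - ((k : ℝ) + 1)))
      = ((N:ℝ) - (k:ℝ) - 1) * (1 / ((k.factorial : ℝ) * ((k+1).factorial : ℝ))) := by
    rw [e3, e2, e1]; field_simp; ring
  have E1 : (C ((((k:ℝ)+2)*((k:ℝ)+3))) : MvPolynomial (Fin 2) ℝ)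
        * C (1 / (((k+2).factorial : ℝ) * ((k+3).factorial : ℝ)))
      = C (1 / (((k+1).factorial : ℝ) * ((k+2).factorial : ℝ))) := by
    rw [← map_mul]; exact congrArg C h1
  have E2 : (C ((((k:ℝ)+2)*((k:ℝ)+3))) : MvPolynomial (Fin 2) ℝ)
        * C (1 / (((k+2).factorial : ℝ) * ((k+3).factorial : ℝ)))
        * C (((k : ℝ) + 2) * ((k : ℝ) + 1) * ((N : ℝ) - ((k : ℝ) + 1)))
      = C ((N:ℝ) - (k:ℝ) - 1) * C (1 / ((k.factorial : ℝ) * ((k+1).factorial : ℝ))) := by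
    rw [← map_mul, ← map_mul, ← map_mul]; exact congrArg C h2
  rw [constraintPoly]
  linear_combination ((C ((k : ℝ) + 2) * X 0 + X 1
      - C (((k : ℝ) + 2) * (((k : ℝ) + 2) + 2 * ε))) * constraintPoly N ε (k+1)) * E1
    - (X 0 * constraintPoly N ε k) * E2

lemma cpQ_rec (N ℓ k : ℕ) :
    C (((k:ℝ)+2)*((k:ℝ)+3)) * cpQ N ℓ (k+2)
      = (C ((k : ℝ) + 2) * X 0 + X 1 - C (((k : ℝ) + 2) * (((k : ℝ) + 2) + (ℓ:ℝ)))) * cpQ N ℓ (k+1)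
        - C ((N:ℝ) - (k:ℝ) - 1) * X 0 * cpQ N ℓ k := by
  have h := cp_norm_rec N ((ℓ:ℝ)/2) k
  rw [show ((k : ℝ) + 2) * (((k : ℝ) + 2) + 2 * ((ℓ:ℝ)/2))
      = ((k : ℝ) + 2) * (((k : ℝ) + 2) + (ℓ:ℝ)) by ring] at h
  simpa [cpQ] using h

lemma cpA_rec (N ℓ k : ℕ) :
    C (((k:ℝ)+2)*((k:ℝ)+3)) *
      (C (1 / (((k+2).factorial : ℝ) * ((k+3).factorial : ℝ))) * constraintPoly (N+ℓ) (-(ℓ:ℝ)/2) (k+2))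
      = (C ((k : ℝ) + 2) * X 0 + X 1 - C (((k : ℝ) + 2) * (((k : ℝ) + 2) - (ℓ:ℝ)))) *
          (C (1 / (((k+1).factorial : ℝ) * ((k+2).factorial : ℝ))) * constraintPoly (N+ℓ) (-(ℓ:ℝ)/2) (k+1))
        - C ((N:ℝ) + (ℓ:ℝ) - (k:ℝ) - 1) * X 0 *
          (C (1 / ((k.factorial : ℝ) * ((k+1).factorial : ℝ))) * constraintPoly (N+ℓ) (-(ℓ:ℝ)/2) k) := by
  have h := cp_norm_rec (N+ℓ) (-(ℓ:ℝ)/2) k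
  rw [show ((k : ℝ) + 2) * (((k : ℝ) + 2) + 2 * (-(ℓ:ℝ)/2))
      = ((k : ℝ) + 2) * (((k : ℝ) + 2) - (ℓ:ℝ)) by ring] at h
  rw [show (((N+ℓ : ℕ)):ℝ) - (k:ℝ) - 1 = (N:ℝ) + (ℓ:ℝ) - (k:ℝ) - 1 by push_cast; ring] at h
  exact h

lemma cpQ_zero (N ℓ : ℕ) : cpQ N ℓ 0 = 1 := by
  simp [cpQ, constraintPoly, Nat.factorial]

lemma cpQ_one (N ℓ : ℕ) : cpQ N ℓ 1 = C (1/2 : ℝ) * (X 0 + X 1 - C (1+(ℓ:ℝ))) := by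
  have c1 : (1 / (((1:ℕ).factorial : ℝ) * (((1:ℕ)+1).factorial : ℝ))) = (1/2 : ℝ) := by
    norm_num [Nat.factorial]
  have c2 : (1:ℝ) + 2 * ((ℓ:ℝ)/2) = 1 + (ℓ:ℝ) := by ring
  rw [cpQ, constraintPoly, c1, c2]

lemma X1_mul_cpQ (N ℓ i : ℕ) :
    X 1 * cpQ N ℓ i
      = C (((i:ℝ)+1)*((i:ℝ)+2)) * cpQ N ℓ (i+1)
        + C (((i:ℝ)+1)*(((i:ℝ)+1)+(ℓ:ℝ))) * cpQ N ℓ i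
        - C ((i:ℝ)+1) * (X 0 * cpQ N ℓ i)
        + C ((N:ℝ)-(i:ℝ)) * (X 0 * cpQ' N ℓ i) := by
  cases i with
  | zero =>
      have hC2 : (C ((1:ℝ)*2) : MvPolynomial (Fin 2) ℝ) * C (1/2 : ℝ) = 1 := by
        rw [← map_mul]; norm_num
      have hC3 : (C ((1:ℝ)*(1+(ℓ:ℝ))) : MvPolynomial (Fin 2) ℝ) = C (1+(ℓ:ℝ)) :=
        congrArg C (by ring)
      have hC4 : (C (1:ℝ) : MvPolynomial (Fin 2) ℝ) = 1 := map_one C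
      simp only [Nat.cast_zero, Nat.zero_add, zero_add]
      rw [cpQ_zero, cpQ_one, show cpQ' N ℓ 0 = 0 from rfl]
      linear_combination (-(X 0 + X 1 - C (1+(ℓ:ℝ)))) * hC2 - hC3 + X 0 * hC4
  | succ m =>
      have h := cpQ_rec N ℓ m
      show X 1 * cpQ N ℓ (m+1) = _
      rw [show m+1+1 = m+2 from rfl, show cpQ' N ℓ (m+1) = cpQ N ℓ m from rfl]
      push_cast
      rw [show ((m:ℝ)+1+1)*((m:ℝ)+1+2) = ((m:ℝ)+2)*((m:ℝ)+3) by ring,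
          show ((m:ℝ)+1+1)*(((m:ℝ)+1+1)+(ℓ:ℝ)) = ((m:ℝ)+2)*(((m:ℝ)+2)+(ℓ:ℝ)) by ring,
          show (m:ℝ)+1+1 = (m:ℝ)+2 by ring,
          show (N:ℝ)-((m:ℝ)+1) = (N:ℝ)-(m:ℝ)-1 by ring]
      linear_combination -h

lemma key_choose (ℓ j : ℕ) (hj : 1 ≤ j) :
    (j:ℝ) * (ℓ.choose j : ℝ) = ((ℓ:ℝ)+1-(j:ℝ)) * (ℓ.choose (j-1) : ℝ) := by
  obtain ⟨m, rfl⟩ : ∃ m, j = m + 1 := ⟨j - 1, by omega⟩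
  simp only [Nat.add_sub_cancel]
  rcases le_or_gt (m+1) ℓ with h | h
  · have hnat := Nat.choose_succ_right_eq ℓ m
    have hc := congrArg (fun n : ℕ => (n : ℝ)) hnat
    push_cast at hc
    rw [Nat.cast_sub (by omega)] at hc
    push_cast at hc ⊢
    linarith [hc]
  · have h1 : ℓ.choose (m+1) = 0 := Nat.choose_eq_zero_of_lt h
    by_cases hm : ℓ < m
    · have h2 : ℓ.choose m = 0 := Nat.choose_eq_zero_of_lt hm
      simp [h1, h2]
    · have hm' : m = ℓ := by omega
      subst hm'
      rw [h1]
      push_cast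
      ring

lemma Cq_congr {a b : ℝ} (h : a = b) (p : MvPolynomial (Fin 2) ℝ) : C a * p = C b * p := by rw [h]

lemma cpS_rec (N ℓ k : ℕ) :
    C (((k:ℝ)+2)*((k:ℝ)+3)) * cpS N ℓ (k+2)
      = (C ((k : ℝ) + 2) * X 0 + X 1 - C (((k : ℝ) + 2) * (((k : ℝ) + 2) - (ℓ:ℝ)))) * cpS N ℓ (k+1)
        - C ((N:ℝ) + (ℓ:ℝ) - (k:ℝ) - 1) * X 0 * cpS N ℓ k := by
  -- hL
  have hL : C (((k:ℝ)+2)*((k:ℝ)+3)) * cpS N ℓ (k+2)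
      = (∑ i ∈ Finset.range (k+2),
          C ((((k:ℝ)+2)*((k:ℝ)+3)) * (ℓ.choose (k+2-i) : ℝ)) * cpQ N ℓ i)
        + C (((k:ℝ)+2)*((k:ℝ)+3)) * cpQ N ℓ (k+2) := by
    rw [cpS, Finset.sum_range_succ, mul_add, Finset.mul_sum]
    congr 1
    · exact Finset.sum_congr rfl fun i _ => by rw [← mul_assoc, ← map_mul]
    · rw [Nat.sub_self, Nat.choose_zero_right, Nat.cast_one, map_one, one_mul]
  -- hy
  have hy : X 1 * cpS N ℓ (k+1)
      = (∑ i ∈ Finset.range (k+2),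
          C ((ℓ.choose (k+1-i) : ℝ) * (((i:ℝ)+1)*((i:ℝ)+2))) * cpQ N ℓ (i+1))
        + (∑ i ∈ Finset.range (k+2),
          C ((ℓ.choose (k+1-i) : ℝ) * (((i:ℝ)+1)*(((i:ℝ)+1)+(ℓ:ℝ)))) * cpQ N ℓ i)
        - (∑ i ∈ Finset.range (k+2),
          C ((ℓ.choose (k+1-i) : ℝ) * ((i:ℝ)+1)) * (X 0 * cpQ N ℓ i))
        + (∑ i ∈ Finset.range (k+2),
          C ((ℓ.choose (k+1-i) : ℝ) * ((N:ℝ)-(i:ℝ))) * (X 0 * cpQ' N ℓ i)) := by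
    rw [cpS, show k+1+1 = k+2 from rfl, Finset.mul_sum,
      ← Finset.sum_add_distrib, ← Finset.sum_sub_distrib, ← Finset.sum_add_distrib]
    refine Finset.sum_congr rfl fun i _ => ?_
    rw [map_mul C ((ℓ.choose (k+1-i) : ℝ)) (((i:ℝ)+1)*((i:ℝ)+2)),
      map_mul C ((ℓ.choose (k+1-i) : ℝ)) (((i:ℝ)+1)*(((i:ℝ)+1)+(ℓ:ℝ))),
      map_mul C ((ℓ.choose (k+1-i) : ℝ)) ((i:ℝ)+1),
      map_mul C ((ℓ.choose (k+1-i) : ℝ)) ((N:ℝ)-(i:ℝ))]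
    linear_combination (C ((ℓ.choose (k+1-i) : ℝ)) : MvPolynomial (Fin 2) ℝ) * X1_mul_cpQ N ℓ i
  -- h1
  have h1 : (∑ i ∈ Finset.range (k+2),
        C ((ℓ.choose (k+1-i) : ℝ) * (((i:ℝ)+1)*((i:ℝ)+2))) * cpQ N ℓ (i+1))
      = (∑ i ∈ Finset.range (k+2),
          C ((ℓ.choose (k+2-i) : ℝ) * ((i:ℝ)*((i:ℝ)+1))) * cpQ N ℓ i)
        + C (((k:ℝ)+2)*((k:ℝ)+3)) * cpQ N ℓ (k+2) := by
    have step : (∑ i ∈ Finset.range (k+2),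
        C ((ℓ.choose (k+1-i) : ℝ) * (((i:ℝ)+1)*((i:ℝ)+2))) * cpQ N ℓ (i+1))
        = ∑ i ∈ Finset.range (k+2),
          (fun j => C ((ℓ.choose (k+2-j) : ℝ) * ((j:ℝ)*((j:ℝ)+1))) * cpQ N ℓ j) (i+1) := by
      refine Finset.sum_congr rfl fun i _ => ?_
      refine Cq_congr ?_ _
      rw [show k+2-(i+1) = k+1-i by omega]
      push_cast
      ring
    rw [step, ← add_zero (∑ i ∈ Finset.range (k+2), _),
      show (0 : MvPolynomial (Fin 2) ℝ)
          = (fun j => C ((ℓ.choose (k+2-j) : ℝ) * ((j:ℝ)*((j:ℝ)+1))) * cpQ N ℓ j) 0 by norm_num,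
      ← Finset.sum_range_succ' (fun j => C ((ℓ.choose (k+2-j) : ℝ) * ((j:ℝ)*((j:ℝ)+1))) * cpQ N ℓ j) (k+2),
      Finset.sum_range_succ (fun j => C ((ℓ.choose (k+2-j) : ℝ) * ((j:ℝ)*((j:ℝ)+1))) * cpQ N ℓ j) (k+2)]
    congr 1
    refine Cq_congr ?_ _
    rw [Nat.sub_self, Nat.choose_zero_right]
    push_cast
    ring
  -- h4
  have h4 : (∑ i ∈ Finset.range (k+2),
        C ((ℓ.choose (k+1-i) : ℝ) * ((N:ℝ)-(i:ℝ))) * (X 0 * cpQ' N ℓ i))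
      = ∑ i ∈ Finset.range (k+1),
          C ((ℓ.choose (k-i) : ℝ) * ((N:ℝ)-(i:ℝ)-1)) * (X 0 * cpQ N ℓ i) := by
    rw [show k+2 = k+1+1 from rfl,
      Finset.sum_range_succ' (fun i => C ((ℓ.choose (k+1-i) : ℝ) * ((N:ℝ)-(i:ℝ))) * (X 0 * cpQ' N ℓ i)) (k+1)]
    rw [show cpQ' N ℓ 0 = 0 from rfl]
    rw [mul_zero, mul_zero, add_zero]
    refine Finset.sum_congr rfl fun i _ => ?_
    rw [show cpQ' N ℓ (i+1) = cpQ N ℓ i from rfl]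
    refine Cq_congr ?_ _
    rw [show k+1-(i+1) = k-i by omega]
    push_cast
    ring
  -- hga
  have hga : C ((k:ℝ)+2) * X 0 * cpS N ℓ (k+1)
      = ∑ i ∈ Finset.range (k+2),
          C (((k:ℝ)+2) * (ℓ.choose (k+1-i) : ℝ)) * (X 0 * cpQ N ℓ i) := by
    rw [cpS, show k+1+1 = k+2 from rfl, mul_assoc, Finset.mul_sum, Finset.mul_sum]
    refine Finset.sum_congr rfl fun i _ => ?_
    rw [map_mul C ((k:ℝ)+2) ((ℓ.choose (k+1-i) : ℝ))]
    ring
  -- hc1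
  have hc1 : C (((k : ℝ) + 2) * (((k : ℝ) + 2) - (ℓ:ℝ))) * cpS N ℓ (k+1)
      = ∑ i ∈ Finset.range (k+2),
          C ((((k:ℝ)+2)*(((k:ℝ)+2)-(ℓ:ℝ))) * (ℓ.choose (k+1-i) : ℝ)) * cpQ N ℓ i := by
    rw [cpS, show k+1+1 = k+2 from rfl, Finset.mul_sum]
    refine Finset.sum_congr rfl fun i _ => ?_
    rw [map_mul C (((k:ℝ)+2)*(((k:ℝ)+2)-(ℓ:ℝ))) ((ℓ.choose (k+1-i) : ℝ))]
    ring
  -- hhb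
  have hhb : C ((N:ℝ) + (ℓ:ℝ) - (k:ℝ) - 1) * X 0 * cpS N ℓ k
      = ∑ i ∈ Finset.range (k+1),
          C (((N:ℝ)+(ℓ:ℝ)-(k:ℝ)-1) * (ℓ.choose (k-i) : ℝ)) * (X 0 * cpQ N ℓ i) := by
    rw [cpS, mul_assoc, Finset.mul_sum, Finset.mul_sum]
    refine Finset.sum_congr rfl fun i _ => ?_
    rw [map_mul C ((N:ℝ)+(ℓ:ℝ)-(k:ℝ)-1) ((ℓ.choose (k-i) : ℝ))]
    ring
  -- hA
  have hA : (∑ i ∈ Finset.range (k+2),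
        C ((((k:ℝ)+2)*((k:ℝ)+3)) * (ℓ.choose (k+2-i) : ℝ)) * cpQ N ℓ i)
      = (∑ i ∈ Finset.range (k+2),
          C ((ℓ.choose (k+2-i) : ℝ) * ((i:ℝ)*((i:ℝ)+1))) * cpQ N ℓ i)
        + (∑ i ∈ Finset.range (k+2),
          C ((ℓ.choose (k+1-i) : ℝ) * (((i:ℝ)+1)*(((i:ℝ)+1)+(ℓ:ℝ)))) * cpQ N ℓ i)
        - (∑ i ∈ Finset.range (k+2),
          C ((((k:ℝ)+2)*(((k:ℝ)+2)-(ℓ:ℝ))) * (ℓ.choose (k+1-i) : ℝ)) * cpQ N ℓ i) := by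
    rw [← Finset.sum_add_distrib, ← Finset.sum_sub_distrib]
    refine Finset.sum_congr rfl fun i hi => ?_
    have hik : i ≤ k+1 := by have := Finset.mem_range.1 hi; omega
    have hkey := key_choose ℓ (k+2-i) (by omega)
    rw [show k+2-i-1 = k+1-i by omega] at hkey
    rw [show ((k+2-i : ℕ):ℝ) = (k:ℝ)+2-(i:ℝ) by
      rw [Nat.cast_sub (by omega)]; push_cast; ring] at hkey
    have hs : (((k:ℝ)+2)*((k:ℝ)+3)) * (ℓ.choose (k+2-i) : ℝ)
        = (ℓ.choose (k+2-i) : ℝ) * ((i:ℝ)*((i:ℝ)+1))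
          + (ℓ.choose (k+1-i) : ℝ) * (((i:ℝ)+1)*(((i:ℝ)+1)+(ℓ:ℝ)))
          - (((k:ℝ)+2)*(((k:ℝ)+2)-(ℓ:ℝ))) * (ℓ.choose (k+1-i) : ℝ) := by
      linear_combination ((k:ℝ)+3+(i:ℝ)) * hkey
    rw [hs, map_sub, map_add]
    ring
  -- hX
  have hX : (∑ i ∈ Finset.range (k+2),
        C (((k:ℝ)+2) * (ℓ.choose (k+1-i) : ℝ)) * (X 0 * cpQ N ℓ i))
      - (∑ i ∈ Finset.range (k+2),
          C ((ℓ.choose (k+1-i) : ℝ) * ((i:ℝ)+1)) * (X 0 * cpQ N ℓ i))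
      + (∑ i ∈ Finset.range (k+1),
          C ((ℓ.choose (k-i) : ℝ) * ((N:ℝ)-(i:ℝ)-1)) * (X 0 * cpQ N ℓ i))
      - (∑ i ∈ Finset.range (k+1),
          C (((N:ℝ)+(ℓ:ℝ)-(k:ℝ)-1) * (ℓ.choose (k-i) : ℝ)) * (X 0 * cpQ N ℓ i)) = 0 := by
    rw [Finset.sum_range_succ (fun i => C (((k:ℝ)+2) * (ℓ.choose (k+1-i) : ℝ)) * (X 0 * cpQ N ℓ i)) (k+1),
      Finset.sum_range_succ (fun i => C ((ℓ.choose (k+1-i) : ℝ) * ((i:ℝ)+1)) * (X 0 * cpQ N ℓ i)) (k+1)]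
    have htops : C (((k:ℝ)+2) * (ℓ.choose (k+1-(k+1)) : ℝ)) * (X 0 * cpQ N ℓ (k+1))
        = C ((ℓ.choose (k+1-(k+1)) : ℝ) * (((k+1 : ℕ):ℝ)+1)) * (X 0 * cpQ N ℓ (k+1)) := by
      refine Cq_congr ?_ _
      rw [Nat.sub_self, Nat.choose_zero_right]
      push_cast
      ring
    have hz : (∑ i ∈ Finset.range (k+1),
          C (((k:ℝ)+2) * (ℓ.choose (k+1-i) : ℝ)) * (X 0 * cpQ N ℓ i))
        - (∑ i ∈ Finset.range (k+1),
            C ((ℓ.choose (k+1-i) : ℝ) * ((i:ℝ)+1)) * (X 0 * cpQ N ℓ i))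
        + (∑ i ∈ Finset.range (k+1),
            C ((ℓ.choose (k-i) : ℝ) * ((N:ℝ)-(i:ℝ)-1)) * (X 0 * cpQ N ℓ i))
        - (∑ i ∈ Finset.range (k+1),
            C (((N:ℝ)+(ℓ:ℝ)-(k:ℝ)-1) * (ℓ.choose (k-i) : ℝ)) * (X 0 * cpQ N ℓ i)) = 0 := by
      rw [← Finset.sum_sub_distrib, ← Finset.sum_add_distrib, ← Finset.sum_sub_distrib]
      refine Finset.sum_eq_zero fun i hi => ?_
      have hik : i ≤ k := by have := Finset.mem_range.1 hi; omega
      have hkey := key_choose ℓ (k+1-i) (by omega)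
      rw [show k+1-i-1 = k-i by omega] at hkey
      rw [show ((k+1-i : ℕ):ℝ) = (k:ℝ)+1-(i:ℝ) by
        rw [Nat.cast_sub (by omega)]; push_cast; ring] at hkey
      have hs : ((k:ℝ)+2) * (ℓ.choose (k+1-i) : ℝ)
          - (ℓ.choose (k+1-i) : ℝ) * ((i:ℝ)+1)
          + (ℓ.choose (k-i) : ℝ) * ((N:ℝ)-(i:ℝ)-1)
          - ((N:ℝ)+(ℓ:ℝ)-(k:ℝ)-1) * (ℓ.choose (k-i) : ℝ) = 0 := by
        linear_combination hkey
      have hc : (C (((k:ℝ)+2) * (ℓ.choose (k+1-i) : ℝ)) : MvPolynomial (Fin 2) ℝ)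
          - C ((ℓ.choose (k+1-i) : ℝ) * ((i:ℝ)+1))
          + C ((ℓ.choose (k-i) : ℝ) * ((N:ℝ)-(i:ℝ)-1))
          - C (((N:ℝ)+(ℓ:ℝ)-(k:ℝ)-1) * (ℓ.choose (k-i) : ℝ)) = 0 := by
        rw [← map_sub, ← map_add, ← map_sub, hs, map_zero]
      linear_combination (X 0 * cpQ N ℓ i) * hc
    linear_combination hz + htops
  linear_combination hL - hga - hy + hc1 + hhb - h1 - h4 + hA - hX

lemma cpA_eq_cpS (N ℓ : ℕ) (k : ℕ) :
    C (1 / ((k.factorial : ℝ) * ((k + 1).factorial : ℝ))) *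
        constraintPoly (N + ℓ) (-(ℓ : ℝ) / 2) k = cpS N ℓ k := by
  induction k using Nat.twoStepInduction with
  | zero =>
      rw [cpS]
      simp [cpQ, constraintPoly, Nat.factorial]
  | one =>
      have c1 : (1 / (((1:ℕ).factorial : ℝ) * (((1:ℕ) + 1).factorial : ℝ))) = (1/2 : ℝ) := by
        norm_num [Nat.factorial]
      rw [cpS, Finset.sum_range_succ, Finset.sum_range_succ, Finset.sum_range_zero, zero_add]
      rw [show constraintPoly (N + ℓ) (-(ℓ : ℝ) / 2) 1
          = X 0 + X 1 - C (1 + 2 * (-(ℓ : ℝ) / 2)) from rfl]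
      rw [show (1:ℕ) - 0 = 1 from rfl, show (1:ℕ) - 1 = 0 from rfl,
        Nat.choose_zero_right, Nat.cast_one, map_one, one_mul,
        cpQ_zero, cpQ_one, mul_one, c1]
      have hch : ((ℓ.choose 1 : ℕ) : ℝ) = (ℓ : ℝ) := by simp
      rw [hch]
      have h1 : (C ((1:ℝ) + 2 * (-(ℓ : ℝ) / 2)) : MvPolynomial (Fin 2) ℝ)
          = C 1 - C (ℓ:ℝ) := by rw [← map_sub]; exact congrArg C (by ring)
      have h2 : (C ((1:ℝ) + (ℓ:ℝ)) : MvPolynomial (Fin 2) ℝ)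
          = C 1 + C (ℓ:ℝ) := by rw [← map_add]
      have h3 : (C (1/2 : ℝ) : MvPolynomial (Fin 2) ℝ) * C (ℓ:ℝ)
          + C (1/2 : ℝ) * C (ℓ:ℝ) = C (ℓ:ℝ) := by
        rw [← map_mul, ← map_add]
        exact congrArg C (by ring)
      linear_combination C (1/2 : ℝ) * h2 - C (1/2 : ℝ) * h1 + h3
  | more k ih1 ih2 =>
      have hA := cpA_rec N ℓ k
      rw [ih1, ih2] at hA
      have hS := cpS_rec N ℓ k
      have hne : (C (((k:ℝ)+2)*((k:ℝ)+3)) : MvPolynomial (Fin 2) ℝ) ≠ 0 := by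
        rw [Ne, C_eq_zero]
        positivity
      exact mul_left_cancel₀ hne (hA.trans hS.symm)

/-- for all `N, ℓ, k ≥ 0`,
`P_k^{(N+ℓ,-ℓ/2)}(x,y)/(k!(k+1)!) = Σ_{i=0}^k binom(ℓ,k-i) P_i^{(N,ℓ/2)}(x,y)/(i!(i+1)!)`
in `ℝ[x,y]`. -/
theorem constraintPoly_binomial_identity (N ℓ k : ℕ) :
    C (1 / ((k.factorial : ℝ) * ((k + 1).factorial : ℝ))) *
        constraintPoly (N + ℓ) (-(ℓ : ℝ) / 2) k =
      ∑ i ∈ Finset.range (k + 1),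
        C ((ℓ.choose (k - i) : ℝ) / ((i.factorial : ℝ) * ((i + 1).factorial : ℝ))) *
          constraintPoly N ((ℓ : ℝ) / 2) i := by
  rw [cpA_eq_cpS, cpS]
  refine Finset.sum_congr rfl fun i _ => ?_
  rw [cpQ, ← mul_assoc, ← map_mul, mul_one_div]
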